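/- Let M̃ be a nonempty closed affine subset of a Hilbert space H and T : M̃ → M̃ a nonexpansive operator with Fix(T) ≠ ∅. Let x⁰, x¹ ∈ M̃ be arbitrary and consider the iteration x^{k+1} = x^k + α_k(x^k − x^{k−1}) + ρ_k[T(x^k + α_k(x^k − x^{k−1})) − x^k − α_k(x^k − x^{k−1})], where (α_k) and (ρ_k) satisfy the inertial parameter condition. Then (i) Σ_{k∈ℕ} ‖x^{k+1} − x^k‖² < +∞, and (ii) (x^k)_{k∈ℕ} converges weakly to a point in Fix(T). -/

import Mathlib

open Filter Topology Set
open scoped InnerProductSpace RealInnerProductSpace Pointwise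

noncomputable section

/-- The inertial parameter condition on the extrapolation parameters `αs` and the
relaxation parameters `ρs`. -/
def InertialCond (αs ρs : ℕ → ℝ) : Prop :=
  ∃ α ρ θ δ : ℝ,
    Monotone αs ∧ αs 1 = 0 ∧ (∀ k, 1 ≤ k → 0 ≤ αs k ∧ αs k ≤ α) ∧ 0 ≤ α ∧ α < 1 ∧
    0 < ρ ∧ 0 < θ ∧ 0 < δ ∧
    (α ^ 2 * (1 + α) + α * θ) / (1 - α ^ 2) < δ ∧
    (∀ k, 1 ≤ k → ρ ≤ ρs k ∧
      ρs k < (δ - α * (α * (1 + α) + α * δ + θ)) / (δ * (1 + α * (1 + α) + α * δ + θ)))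

variable {H : Type*} [NormedAddCommGroup H] [InnerProductSpace ℝ H]

/-- `g` is a proper, lower semicontinuous, convex function with values in `(-∞, +∞]`. -/
def Gamma0 (g : H → EReal) : Prop :=
  (∃ x, g x ≠ ⊤) ∧ (∀ x, g x ≠ ⊥) ∧ LowerSemicontinuous g ∧
  ∀ x y : H, ∀ a b : ℝ, 0 ≤ a → 0 ≤ b → a + b = 1 →
    g (a • x + b • y) ≤ (a : EReal) * g x + (b : EReal) * g y

/-- The Legendre–Fenchel conjugate of `h`. -/
def fenchel (h : H → EReal) (y : H) : EReal :=
  ⨆ x : H, ((⟪y, x⟫_ℝ : ℝ) : EReal) - h x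

/-- `p = prox_{τ g}(u)`, i.e. `p` minimizes `w ↦ g w + ‖u - w‖² / (2τ)`. -/
def IsProx (g : H → EReal) (τ : ℝ) (u p : H) : Prop :=
  ∀ w, g p + ((1 / (2 * τ) * ‖u - p‖ ^ 2 : ℝ) : EReal) ≤
    g w + ((1 / (2 * τ) * ‖u - w‖ ^ 2 : ℝ) : EReal)

/-- `p = prox_{S g}(u)` for a positive definite map `S` with inverse `Sinv`, i.e. `p`
minimizes `w ↦ g w + (1/2) ⟪S⁻¹ (u - w), u - w⟫`. -/
def IsProxOp (g : H → EReal) (Sinv : H →L[ℝ] H) (u p : H) : Prop :=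
  ∀ w, g p + ((1 / 2 * ⟪Sinv (u - p), u - p⟫_ℝ : ℝ) : EReal) ≤
    g w + ((1 / 2 * ⟪Sinv (u - w), u - w⟫_ℝ : ℝ) : EReal)

/-- `B` is cocoercive with respect to `Linv = L⁻¹`. -/
def CocoerciveWrt (B : H → H) (Linv : H →L[ℝ] H) : Prop :=
  ∀ x y : H, ⟪Linv (B x - B y), B x - B y⟫_ℝ ≤ ⟪B x - B y, x - y⟫_ℝ

/-- `L` is a selfadjoint positive definite (bounded linear) map. -/
def PosDefSA (L : H →L[ℝ] H) : Prop :=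
  (∀ x y : H, ⟪L x, y⟫_ℝ = ⟪x, L y⟫_ℝ) ∧ ∀ x : H, x ≠ 0 → 0 < ⟪L x, x⟫_ℝ

/-- `Linv` is a two-sided inverse of `L`. -/
def InvPair (L Linv : H →L[ℝ] H) : Prop :=
  (∀ x, L (Linv x) = x) ∧ (∀ x, Linv (L x) = x)

/-- The subdifferential of an extended-real-valued convex function. -/
def subdiff (g : H → EReal) (x : H) : Set H :=
  {u | ∀ z, g x + ((⟪u, z - x⟫_ℝ : ℝ) : EReal) ≤ g z}

/-- The diagonal operator on `EuclideanSpace ℝ (Fin q)` with diagonal entries `t`. -/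
def diagOp {q : ℕ} (t : Fin q → ℝ) :
    EuclideanSpace ℝ (Fin q) →L[ℝ] EuclideanSpace ℝ (Fin q) :=
  LinearMap.toContinuousLinearMap
  { toFun := fun x => WithLp.toLp 2 (fun i => t i * x i)
    map_add' := by intro x y; ext i; simp [mul_add]
    map_smul' := by intro c x; ext i; simp [smul_eq_mul] <;> ring }

end

/-!
Write `y_k = x_k + α_k (x_k - x_{k-1})`, so that `x_{k+1} = y_k + ρ_k (T y_k - y_k)`, and let `σ`
bound `(1 - ρ_k) / ρ_k` from below. For a fixed point `z` and `φ_k = ‖x_k - z‖²`, nonexpansiveness,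
the identity for `‖y_k - z‖²` and Young's inequality give
`φ_{k+1} - φ_k - α_k (φ_k - φ_{k-1}) ≤ β ‖x_k - x_{k-1}‖² - σ (1 - α) ‖x_{k+1} - x_k‖²`
with `β = α (1 + α) + σ (1 - α) α`. The parameter condition yields `α (1 + α) < σ (1 - α)²`, i.e.
`β < σ (1 - α)`, so `φ_{k+1} - α_k φ_k + β ‖x_{k+1} - x_k‖²` decreases by a fixed multiple of
`‖x_{k+1} - x_k‖²`; this gives the summability, and then the convergence of `φ` for every fixed
point. As `‖T x_k - x_k‖ → 0`, weak cluster points are fixed points (demiclosedness), and by Opial's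
argument two of them cannot differ.
-/

theorem le_max_of_le_mul_add {u : ℕ → ℝ} {a b : ℝ} (ha₀ : 0 ≤ a) (ha₁ : a < 1)
    (hu : ∀ n, u (n + 1) ≤ a * u n + b) (n : ℕ) : u n ≤ max (u 0) (b / (1 - a)) := by
  induction n with
  | zero => exact le_max_left _ _
  | succ n ih =>
    have hb : b ≤ (1 - a) * max (u 0) (b / (1 - a)) := by
      rw [← div_le_iff₀' (by linarith)]
      exact le_max_right _ _
    calc u (n + 1) ≤ a * u n + b := hu n
      _ ≤ a * max (u 0) (b / (1 - a)) + (1 - a) * max (u 0) (b / (1 - a)) := by gcongr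
      _ = max (u 0) (b / (1 - a)) := by ring

theorem summable_of_mul_le_sub {w μ : ℕ → ℝ} {c L : ℝ} (hc : 0 < c) (hw : ∀ n, 0 ≤ w n)
    (hμ : ∀ n, c * w n ≤ μ n - μ (n + 1)) (hL : ∀ n, L ≤ μ n) : Summable w := by
  refine summable_of_sum_range_le hw (c := (μ 0 - L) / c) fun n => ?_
  rw [le_div_iff₀' hc, Finset.mul_sum]
  linarith [Finset.sum_range_sub' μ n, Finset.sum_le_sum fun i (_ : i ∈ Finset.range n) => hμ i,
    hL n]

theorem summable_of_le_mul_add {θ γ : ℕ → ℝ} {a : ℝ} (ha₁ : a < 1) (hθ : ∀ n, 0 ≤ θ n)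
    (hγ₀ : ∀ n, 0 ≤ γ n) (hγ : Summable γ) (hrec : ∀ n, θ (n + 1) ≤ a * θ n + γ n) :
    Summable θ := by
  refine summable_of_sum_range_le hθ (c := (θ 0 + ∑' n, γ n) / (1 - a)) fun n => ?_
  have hmono : ∑ i ∈ Finset.range n, θ i ≤ ∑ i ∈ Finset.range (n + 1), θ i :=
    Finset.sum_le_sum_of_subset_of_nonneg (by simp) fun i _ _ => hθ i
  have hstep : ∑ i ∈ Finset.range (n + 1), θ i ≤
      θ 0 + a * ∑ i ∈ Finset.range n, θ i + ∑' n, γ n := by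
    rw [Finset.sum_range_succ', Finset.mul_sum]
    linarith [Finset.sum_le_sum fun i (_ : i ∈ Finset.range n) => hrec i,
      Finset.sum_add_distrib (s := Finset.range n) (f := fun i => a * θ i) (g := γ),
      hγ.sum_le_tsum (Finset.range n) fun i _ => hγ₀ i]
  rw [le_div_iff₀ (by linarith)]
  linarith

theorem exists_tendsto_of_summable_max_sub {φ : ℕ → ℝ} {L : ℝ} (hL : ∀ n, L ≤ φ n)
    (hθ : Summable fun n => max (φ (n + 1) - φ n) 0) : ∃ l, Tendsto φ atTop (𝓝 l) := by
  set θ := fun n => max (φ (n + 1) - φ n) 0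
  set ψ := fun n => φ n - ∑ i ∈ Finset.range n, θ i
  have hψ : Antitone ψ := antitone_nat_of_succ_le fun n => by
    simp only [ψ, Finset.sum_range_succ]
    linarith [le_max_left (φ (n + 1) - φ n) 0]
  have hψL : BddBelow (Set.range ψ) := ⟨L - ∑' i, θ i, by
    rintro _ ⟨n, rfl⟩
    linarith [hL n, hθ.sum_le_tsum (Finset.range n) fun i _ => le_max_right _ _]⟩
  exact ⟨_, ((tendsto_atTop_ciInf hψ hψL).add hθ.hasSum.tendsto_sum_nat).congr
    fun n => sub_add_cancel _ _⟩

theorem exists_tendsto_of_sub_le_mul_sub_add {φ a γ : ℕ → ℝ} {α : ℝ} (hφ : ∀ n, 0 ≤ φ n)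
    (ha₀ : ∀ n, 0 ≤ a n) (haα : ∀ n, a n ≤ α) (hα : α < 1) (hγ₀ : ∀ n, 0 ≤ γ n)
    (hγ : Summable γ) (h : ∀ n, φ (n + 2) - φ (n + 1) ≤ a n * (φ (n + 1) - φ n) + γ n) :
    ∃ l, Tendsto φ atTop (𝓝 l) := by
  refine exists_tendsto_of_summable_max_sub hφ <|
    summable_of_le_mul_add hα (fun n => le_max_right _ _) hγ₀ hγ fun n => ?_
  have hpos : a n * (φ (n + 1) - φ n) ≤ α * max (φ (n + 1) - φ n) 0 :=
    (mul_le_mul_of_nonneg_left (le_max_left _ _) (ha₀ n)).trans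
      (mul_le_mul_of_nonneg_right (haα n) (le_max_right _ _))
  exact max_le (by linarith [h n]) (add_nonneg (mul_nonneg ((ha₀ n).trans (haα n))
    (le_max_right _ _)) (hγ₀ n))

theorem summable_of_inertial_descent {φ w a : ℕ → ℝ} {α β γ : ℝ} (hφ : ∀ n, 0 ≤ φ n)
    (hw : ∀ n, 0 ≤ w n) (ha : Monotone a) (ha₀ : ∀ n, 0 ≤ a n) (haα : ∀ n, a n ≤ α)
    (hα : α < 1) (hβ : 0 ≤ β) (hβγ : β < γ)
    (h : ∀ n, φ (n + 2) ≤ φ (n + 1) + a n * (φ (n + 1) - φ n) + β * w n - γ * w (n + 1)) :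
    Summable w := by
  set μ := fun n => φ (n + 1) - a n * φ n + β * w n
  have hμ : ∀ n, (γ - β) * w (n + 1) ≤ μ n - μ (n + 1) := fun n => by
    nlinarith [h n, mul_le_mul_of_nonneg_right (ha n.le_succ) (hφ (n + 1))]
  have hμ₀ : ∀ n, μ n ≤ μ 0 := fun n =>
    antitone_nat_of_succ_le (fun n => by nlinarith [hμ n, hw (n + 1)]) n.zero_le
  have hφB : ∀ n, φ n ≤ max (φ 0) (μ 0 / (1 - α)) :=
    le_max_of_le_mul_add ((ha₀ 0).trans (haα 0)) hα fun n => by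
      nlinarith [hμ₀ n, mul_le_mul_of_nonneg_right (haα n) (hφ n), hw n]
  have hμL : ∀ n, -(α * max (φ 0) (μ 0 / (1 - α))) ≤ μ n := fun n => by
    nlinarith [hφ (n + 1), hw n, mul_le_mul (haα n) (hφB n) (hφ n) ((ha₀ 0).trans (haα 0))]
  exact (summable_nat_add_iff 1).mp
    (summable_of_mul_le_sub (sub_pos.2 hβγ) (fun n => hw _) hμ hμL)

theorem summable_and_tendsto_of_inertial_descent {φ w a : ℕ → ℝ} {α β γ : ℝ}
    (hφ : ∀ n, 0 ≤ φ n) (hw : ∀ n, 0 ≤ w n) (ha : Monotone a) (ha₀ : ∀ n, 0 ≤ a n)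
    (haα : ∀ n, a n ≤ α) (hα : α < 1) (hβ : 0 ≤ β) (hβγ : β < γ)
    (h : ∀ n, φ (n + 2) ≤ φ (n + 1) + a n * (φ (n + 1) - φ n) + β * w n - γ * w (n + 1)) :
    Summable w ∧ ∃ l, Tendsto φ atTop (𝓝 l) := by
  have hsum := summable_of_inertial_descent hφ hw ha ha₀ haα hα hβ hβγ h
  refine ⟨hsum, exists_tendsto_of_sub_le_mul_sub_add hφ ha₀ haα hα (fun n => mul_nonneg hβ (hw n))
    (hsum.mul_left β) fun n => ?_⟩
  nlinarith [h n, hw (n + 1)]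

theorem inertial_margin {α δ θ : ℝ} (hα₀ : 0 ≤ α) (hα₁ : α < 1) (hδ : 0 < δ) (hθ : 0 < θ) :
    α * (1 + α) * (δ - α * (α * (1 + α) + α * δ + θ)) <
      (α * (1 + α) + α * δ + θ) * (δ + α) * (1 - α) ^ 2 := by
  -- RHS - LHS = `θ K + α Q` for the `K`, `Q` below, and
  -- `Q = ((1 - α) δ - α (1 + 3α) / 2)² + α (4 - α - 2α² - α³) / 4`
  have hK : 0 < (δ + α) * (1 - α) ^ 2 + α ^ 2 * (1 + α) := by
    have : 0 < (1 - α) ^ 2 := by nlinarith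
    positivity
  have hQ : 0 ≤ (1 - α) ^ 2 * δ ^ 2 - α * (1 - α) * (1 + 3 * α) * δ +
      α * (1 + α) * (1 - α + 2 * α ^ 2) := by
    nlinarith [sq_nonneg ((1 - α) * δ - α * (1 + 3 * α) / 2),
      mul_nonneg hα₀ (mul_nonneg hα₀ hα₀), mul_nonneg hα₀ hα₀]
  nlinarith [mul_pos hθ hK, mul_nonneg hα₀ hQ]

structure InertialParams (αs ρs : ℕ → ℝ) (α ρ σ : ℝ) : Prop where
  monotone : Monotone αs
  nonneg : ∀ k, 1 ≤ k → 0 ≤ αs k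
  le : ∀ k, 1 ≤ k → αs k ≤ α
  lt_one : α < 1
  pos : 0 < ρ
  le_rho : ∀ k, 1 ≤ k → ρ ≤ ρs k
  le_sigma : ∀ k, 1 ≤ k → σ ≤ (1 - ρs k) / ρs k
  margin : α * (1 + α) < σ * (1 - α) ^ 2

theorem InertialCond.exists_inertialParams {αs ρs : ℕ → ℝ} (h : InertialCond αs ρs) :
    ∃ α ρ σ, InertialParams αs ρs α ρ σ := by
  obtain ⟨α, ρ, θ, δ, hmono, -, hαs, hα₀, hα₁, hρ, hθ, hδ, hδα, hρs⟩ := h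
  set A := α * (1 + α) + α * δ + θ
  have hδA : 0 < δ - α * A := by
    rw [div_lt_iff₀ (by nlinarith)] at hδα
    linarith
  set ρmax := (δ - α * A) / (δ * (1 + A))
  have hρmax : 0 < ρmax := by positivity
  have hρs_lt : ∀ k, 1 ≤ k → ρs k < ρmax := fun k hk => by
    simpa only [show 1 + α * (1 + α) + α * δ + θ = 1 + A by ring] using (hρs k hk).2
  refine ⟨α, ρ, (1 - ρmax) / ρmax, ⟨hmono, fun k hk => (hαs k hk).1, fun k hk => (hαs k hk).2,
    hα₁, hρ, fun k hk => (hρs k hk).1, fun k hk => ?_, ?_⟩⟩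
  · rw [div_le_div_iff₀ hρmax (hρ.trans_le (hρs k hk).1)]
    nlinarith [hρs_lt k hk]
  · have hσ : (1 - ρmax) / ρmax = A * (δ + α) / (δ - α * A) := by
      have hA : 1 + A ≠ 0 := by positivity
      have hδA' := hδA.ne'
      simp only [ρmax]
      field_simp
      ring
    rw [hσ, div_mul_eq_mul_div, lt_div_iff₀ hδA]
    exact inertial_margin hα₀ hα₁ hδ hθ

theorem InertialParams.alpha_nonneg {αs ρs : ℕ → ℝ} {α ρ σ : ℝ}
    (hp : InertialParams αs ρs α ρ σ) : 0 ≤ α :=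
  (hp.nonneg 1 le_rfl).trans (hp.le 1 le_rfl)

theorem InertialParams.sigma_nonneg {αs ρs : ℕ → ℝ} {α ρ σ : ℝ}
    (hp : InertialParams αs ρs α ρ σ) : 0 ≤ σ := by
  nlinarith [hp.margin, hp.alpha_nonneg]

theorem add_smul_sub_mem {H : Type*} [AddCommGroup H] [Module ℝ H] {M : Set H}
    (hM : ∀ x ∈ M, ∀ y ∈ M, ∀ t : ℝ, t • x + (1 - t) • y ∈ M)
    {u v : H} (hu : u ∈ M) (hv : v ∈ M) (t : ℝ) : u + t • (u - v) ∈ M := by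
  convert hM u hu v hv (1 + t) using 1
  module

theorem convex_of_forall_smul_add_one_sub_smul_mem {H : Type*} [AddCommGroup H] [Module ℝ H]
    {M : Set H} (hM : ∀ x ∈ M, ∀ y ∈ M, ∀ t : ℝ, t • x + (1 - t) • y ∈ M) : Convex ℝ M :=
  fun x hx y hy a b _ _ hab => by
    rw [eq_sub_of_add_eq' hab]
    exact hM x hx y hy a

theorem norm_apply_sub_le {H : Type*} [SeminormedAddCommGroup H] {M : Set H} {T : H → H}
    (hT : ∀ x ∈ M, ∀ y ∈ M, ‖T x - T y‖ ≤ ‖x - y‖) {x y : H} (hx : x ∈ M) (hy : y ∈ M) :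
    ‖T x - x‖ ≤ 2 * ‖x - y‖ + ‖T y - y‖ := by
  calc ‖T x - x‖ = ‖(T x - T y) + (T y - y) + (y - x)‖ := by congr 1; abel
    _ ≤ ‖T x - T y‖ + ‖T y - y‖ + ‖y - x‖ := norm_add₃_le
    _ ≤ 2 * ‖x - y‖ + ‖T y - y‖ := by linarith [hT x hx y hy, norm_sub_rev y x]

section InnerProductSpace

variable {H : Type*} [NormedAddCommGroup H] [InnerProductSpace ℝ H]

theorem norm_add_smul_sub_sq_le {y z E : H} (hE : ‖y + E - z‖ ≤ ‖y - z‖) {r : ℝ} (hr : 0 ≤ r) :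
    ‖y + r • E - z‖ ^ 2 ≤ ‖y - z‖ ^ 2 - r * (1 - r) * ‖E‖ ^ 2 := by
  rw [show y + E - z = (y - z) + E by abel] at hE
  have hE' := pow_le_pow_left₀ (norm_nonneg _) hE 2
  rw [norm_add_sq_real] at hE'
  rw [show y + r • E - z = (y - z) + r • E by abel, norm_add_sq_real, inner_smul_right,
    norm_smul, mul_pow, Real.norm_eq_abs, sq_abs]
  nlinarith

theorem norm_add_smul_sub_sub_sq (u v z : H) (a : ℝ) :
    ‖u + a • (u - v) - z‖ ^ 2 =
      (1 + a) * ‖u - z‖ ^ 2 - a * ‖v - z‖ ^ 2 + a * (1 + a) * ‖u - v‖ ^ 2 := by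
  rw [show u + a • (u - v) - z = (u - z) + a • ((u - z) - (v - z)) by module,
    show u - v = (u - z) - (v - z) by abel]
  generalize u - z = p, v - z = q
  simp only [norm_add_sq_real, norm_sub_sq_real, inner_smul_right, inner_sub_right, norm_smul,
    mul_pow, Real.norm_eq_abs, sq_abs, real_inner_self_eq_norm_sq]
  ring

theorem mul_sub_le_norm_sub_smul_sq (u v : H) {a α : ℝ} (ha : 0 ≤ a) (haα : a ≤ α)
    (hα : α ≤ 1) : (1 - α) * (‖u‖ ^ 2 - a * ‖v‖ ^ 2) ≤ ‖u - a • v‖ ^ 2 := by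
  rw [norm_sub_sq_real, inner_smul_right, norm_smul, mul_pow, Real.norm_eq_abs, sq_abs]
  have hinner := real_inner_le_norm u v
  rcases ha.eq_or_lt with rfl | ha'
  · nlinarith [sq_nonneg ‖u‖]
  -- `α (RHS - LHS) ≥ (α‖u‖ - a‖v‖)² + a (α - a) (1 - α) ‖v‖²`
  refine le_of_mul_le_mul_left ?_ (ha'.trans_le haα)
  nlinarith [sq_nonneg (α * ‖u‖ - a * ‖v‖), mul_le_mul_of_nonneg_left hinner ha,
    mul_nonneg (mul_nonneg ha (sub_nonneg.2 haα)) (mul_nonneg (sub_nonneg.2 hα) (sq_nonneg ‖v‖))]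

end InnerProductSpace

def IsInertialKMIterate {H : Type*} [AddCommGroup H] [Module ℝ H] (T : H → H)
    (αs ρs : ℕ → ℝ) (x : ℕ → H) : Prop :=
  ∀ k, 1 ≤ k →
    x (k + 1) = x k + αs k • (x k - x (k - 1)) +
      ρs k • (T (x k + αs k • (x k - x (k - 1))) - (x k + αs k • (x k - x (k - 1))))

section InertialKM

variable {H : Type*} [NormedAddCommGroup H] [InnerProductSpace ℝ H]

theorem norm_sub_sq_le_of_inertialKM_step {M : Set H} {T : H → H}
    (hT : ∀ x ∈ M, ∀ y ∈ M, ‖T x - T y‖ ≤ ‖x - y‖) {u v w z : H} {a r α σ : ℝ}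
    (hw : w = u + a • (u - v) + r • (T (u + a • (u - v)) - (u + a • (u - v))))
    (hy : u + a • (u - v) ∈ M) (hz : z ∈ M) (hTz : T z = z) (ha : 0 ≤ a) (haα : a ≤ α)
    (hα : α ≤ 1) (hr : 0 < r) (hσ : 0 ≤ σ) (hσr : σ ≤ (1 - r) / r) :
    ‖w - z‖ ^ 2 ≤ ‖u - z‖ ^ 2 + a * (‖u - z‖ ^ 2 - ‖v - z‖ ^ 2) +
      (α * (1 + α) + σ * (1 - α) * α) * ‖u - v‖ ^ 2 - σ * (1 - α) * ‖w - u‖ ^ 2 := by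
  set y := u + a • (u - v) with hy_def
  have hfejer : ‖w - z‖ ^ 2 ≤ ‖y - z‖ ^ 2 - r * (1 - r) * ‖T y - y‖ ^ 2 := by
    rw [hw]
    refine norm_add_smul_sub_sq_le ?_ hr.le
    simpa only [add_sub_cancel, hTz] using hT y hy z hz
  have hrelax : r * (1 - r) * ‖T y - y‖ ^ 2 = (1 - r) / r * ‖(w - u) - a • (u - v)‖ ^ 2 := by
    rw [show (w - u) - a • (u - v) = r • (T y - y) by rw [hw, hy_def]; abel, norm_smul, mul_pow,
      Real.norm_eq_abs, sq_abs]
    field_simp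
  have hyoung : σ * (1 - α) * (‖w - u‖ ^ 2 - a * ‖u - v‖ ^ 2) ≤
      (1 - r) / r * ‖(w - u) - a • (u - v)‖ ^ 2 := by
    rw [mul_assoc]
    exact (mul_le_mul_of_nonneg_left (mul_sub_le_norm_sub_smul_sq _ _ ha haα hα) hσ).trans
      (mul_le_mul_of_nonneg_right hσr (sq_nonneg _))
  have hcoeff : a * (1 + a) + σ * (1 - α) * a ≤ α * (1 + α) + σ * (1 - α) * α := by
    have : 0 ≤ σ * (1 - α) := mul_nonneg hσ (by linarith)
    nlinarith
  rw [norm_add_smul_sub_sub_sq] at hfejer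
  nlinarith [mul_le_mul_of_nonneg_right hcoeff (sq_nonneg ‖u - v‖)]

theorem norm_apply_sub_le_of_inertialKM_step {M : Set H} {T : H → H}
    (hT : ∀ x ∈ M, ∀ y ∈ M, ‖T x - T y‖ ≤ ‖x - y‖) {u v w : H} {a r α ρ : ℝ}
    (hw : w = u + a • (u - v) + r • (T (u + a • (u - v)) - (u + a • (u - v))))
    (hu : u ∈ M) (hy : u + a • (u - v) ∈ M) (ha : 0 ≤ a) (haα : a ≤ α) (hρ : 0 < ρ)
    (hρr : ρ ≤ r) :
    ‖T u - u‖ ≤ 2 * α * ‖u - v‖ + (‖w - u‖ + α * ‖u - v‖) / ρ := by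
  set y := u + a • (u - v) with hy_def
  have hay : ‖a • (u - v)‖ ≤ α * ‖u - v‖ := by
    rw [norm_smul, Real.norm_of_nonneg ha]
    gcongr
  have huy : ‖u - y‖ ≤ α * ‖u - v‖ := by
    rwa [show u - y = -(a • (u - v)) by rw [hy_def]; abel, norm_neg]
  have hTy : ρ * ‖T y - y‖ ≤ ‖w - u‖ + α * ‖u - v‖ :=
    calc ρ * ‖T y - y‖ ≤ r * ‖T y - y‖ := by gcongr
      _ = ‖(w - u) - a • (u - v)‖ := by
        rw [show (w - u) - a • (u - v) = r • (T y - y) by rw [hw, hy_def]; abel, norm_smul,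
          Real.norm_of_nonneg (hρ.le.trans hρr)]
      _ ≤ ‖w - u‖ + α * ‖u - v‖ := (norm_sub_le _ _).trans (by gcongr)
  have := norm_apply_sub_le hT hu hy
  have := (le_div_iff₀' hρ).2 hTy
  linarith

variable {M : Set H} {T : H → H} {αs ρs : ℕ → ℝ} {x : ℕ → H} {α ρ σ : ℝ}

theorem IsInertialKMIterate.mem (hiter : IsInertialKMIterate T αs ρs x)
    (hM : ∀ x ∈ M, ∀ y ∈ M, ∀ t : ℝ, t • x + (1 - t) • y ∈ M) (hTM : ∀ x ∈ M, T x ∈ M)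
    (hx0 : x 0 ∈ M) (hx1 : x 1 ∈ M) (k : ℕ) : x k ∈ M := by
  suffices ∀ k, x k ∈ M ∧ x (k + 1) ∈ M from (this k).1
  intro k
  induction k with
  | zero => exact ⟨hx0, hx1⟩
  | succ k ih =>
    have hy := add_smul_sub_mem hM ih.2 ih.1 (αs (k + 1))
    refine ⟨ih.2, ?_⟩
    rw [hiter (k + 1) k.succ_pos, Nat.add_sub_cancel]
    convert hM _ (hTM _ hy) _ hy (ρs (k + 1)) using 1
    module

theorem IsInertialKMIterate.summable_and_tendsto (hiter : IsInertialKMIterate T αs ρs x)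
    (hp : InertialParams αs ρs α ρ σ) (hM : ∀ x ∈ M, ∀ y ∈ M, ∀ t : ℝ, t • x + (1 - t) • y ∈ M)
    (hT : ∀ x ∈ M, ∀ y ∈ M, ‖T x - T y‖ ≤ ‖x - y‖) (hxM : ∀ k, x k ∈ M) {z : H} (hz : z ∈ M)
    (hTz : T z = z) :
    (Summable fun n => ‖x (n + 1) - x n‖ ^ 2) ∧
      ∃ l, Tendsto (fun n => ‖x n - z‖ ^ 2) atTop (𝓝 l) :=
  summable_and_tendsto_of_inertial_descent (fun _ => sq_nonneg _) (fun _ => sq_nonneg _)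
    (fun _ _ h => hp.monotone (by omega)) (fun n => hp.nonneg _ n.succ_pos)
    (fun n => hp.le _ n.succ_pos) hp.lt_one
    (by nlinarith [hp.alpha_nonneg, mul_nonneg hp.sigma_nonneg (sub_nonneg.2 hp.lt_one.le)])
    (by nlinarith [hp.margin])
    fun n => norm_sub_sq_le_of_inertialKM_step hT (hiter (n + 1) n.succ_pos)
      (add_smul_sub_mem hM (hxM _) (hxM n) _) hz hTz (hp.nonneg _ n.succ_pos)
      (hp.le _ n.succ_pos) hp.lt_one.le (hp.pos.trans_le (hp.le_rho _ n.succ_pos))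
      hp.sigma_nonneg (hp.le_sigma _ n.succ_pos)

theorem IsInertialKMIterate.tendsto_norm_apply_sub (hiter : IsInertialKMIterate T αs ρs x)
    (hp : InertialParams αs ρs α ρ σ) (hM : ∀ x ∈ M, ∀ y ∈ M, ∀ t : ℝ, t • x + (1 - t) • y ∈ M)
    (hT : ∀ x ∈ M, ∀ y ∈ M, ‖T x - T y‖ ≤ ‖x - y‖) (hxM : ∀ k, x k ∈ M)
    (hsum : Summable fun n => ‖x (n + 1) - x n‖ ^ 2) :
    Tendsto (fun k => ‖T (x k) - x k‖) atTop (𝓝 0) := by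
  have hd : Tendsto (fun n => ‖x (n + 1) - x n‖) atTop (𝓝 0) := by
    simpa [Real.sqrt_sq (norm_nonneg _)] using hsum.tendsto_atTop_zero.sqrt
  refine (tendsto_add_atTop_iff_nat 1).1 <| squeeze_zero (fun _ => norm_nonneg _)
    (fun n => norm_apply_sub_le_of_inertialKM_step hT (hiter (n + 1) n.succ_pos) (hxM _)
      (add_smul_sub_mem hM (hxM _) (hxM n) _) (hp.nonneg _ n.succ_pos) (hp.le _ n.succ_pos)
      hp.pos (hp.le_rho _ n.succ_pos)) ?_
  simpa using (hd.const_mul (2 * α)).add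
    (((hd.comp (tendsto_add_atTop_nat 1)).add (hd.const_mul α)).div_const ρ)

end InertialKM

theorem exists_norm_le_of_tendsto_norm_sub_sq {H : Type*} [SeminormedAddCommGroup H]
    {x : ℕ → H} {z : H} {a : ℝ} (h : Tendsto (fun n => ‖x n - z‖ ^ 2) atTop (𝓝 a)) :
    ∃ R, ∀ n, ‖x n‖ ≤ R := by
  obtain ⟨B, hB⟩ := h.bddAbove_range
  refine ⟨1 + B + ‖z‖, fun n => ?_⟩
  nlinarith [hB ⟨n, rfl⟩, norm_sub_norm_le (x n) z, sq_nonneg (‖x n - z‖ - 1)]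

section Weak

variable {H : Type*} [NormedAddCommGroup H] [InnerProductSpace ℝ H] {ι : Type*}

def TendstoWeakly (x : ι → H) (l : Filter ι) (p : H) : Prop :=
  ∀ v, Tendsto (fun i => ⟪x i, v⟫_ℝ) l (𝓝 ⟪p, v⟫_ℝ)

theorem TendstoWeakly.tendsto_inner_sub {x : ι → H} {l : Filter ι} {p : H}
    (hp : TendstoWeakly x l p) (q v : H) :
    Tendsto (fun i => ⟪x i - q, v⟫_ℝ) l (𝓝 ⟪p - q, v⟫_ℝ) := by
  simpa only [inner_sub_left] using (hp v).sub_const ⟪q, v⟫_ℝ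

theorem exists_tendstoWeakly_of_norm_le [CompleteSpace H] (U : Ultrafilter ι) {x : ι → H}
    {R : ℝ} (hR : ∀ i, ‖x i‖ ≤ R) : ∃ p, TendstoWeakly x U p := by
  set f : ι → WeakDual ℝ H := fun i =>
    StrongDual.toWeakDual (InnerProductSpace.toDual ℝ H (x i))
  have hf : (U.map f : Filter (WeakDual ℝ H)) ≤
      𝓟 (WeakDual.toStrongDual ⁻¹' Metric.closedBall 0 R) := by
    rw [Ultrafilter.coe_map, le_principal_iff, mem_map]
    exact univ_mem' fun i => by simpa [f] using hR i
  obtain ⟨φ, -, hφ⟩ := (WeakDual.isCompact_closedBall 0 R).ultrafilter_le_nhds _ hf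
  refine ⟨(InnerProductSpace.toDual ℝ H).symm (WeakDual.toStrongDual φ), fun v => ?_⟩
  rw [InnerProductSpace.toDual_symm_apply]
  exact (tendsto_iff_forall_eval_tendsto_topDualPairing.1 hφ) v

theorem Convex.mem_of_tendstoWeakly [CompleteSpace H] {M : Set H} (hM : IsClosed M)
    (hconv : Convex ℝ M) {x : ι → H} {l : Filter ι} [l.NeBot] (hx : ∀ᶠ i in l, x i ∈ M) {p : H}
    (hp : TendstoWeakly x l p) : p ∈ M := by
  obtain ⟨q, hqM, hq⟩ := exists_norm_eq_iInf_of_complete_convex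
    (hx.exists.elim fun i hi => ⟨x i, hi⟩) hM.isComplete hconv p
  have hproj := (norm_eq_iInf_iff_real_inner_le_zero hconv hqM).1 hq
  have hpq : ⟪p - q, p - q⟫_ℝ ≤ 0 :=
    le_of_tendsto (hp.tendsto_inner_sub q (p - q)) <| hx.mono fun i hi => by
      rw [real_inner_comm]
      exact hproj _ hi
  rwa [sub_eq_zero.1 (real_inner_self_nonpos.1 hpq)]

theorem apply_eq_of_tendstoWeakly {M : Set H} {T : H → H}
    (hT : ∀ x ∈ M, ∀ y ∈ M, ‖T x - T y‖ ≤ ‖x - y‖) {x : ι → H} {l : Filter ι} [l.NeBot]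
    (hx : ∀ i, x i ∈ M) {R : ℝ} (hR : ∀ i, ‖x i‖ ≤ R)
    (hres : Tendsto (fun i => ‖T (x i) - x i‖) l (𝓝 0)) {p : H} (hpM : p ∈ M)
    (hp : TendstoWeakly x l p) : T p = p := by
  set ε := fun i => ‖T (x i) - x i‖
  -- expand `‖x i - T p‖² ≤ (ε i + ‖x i - p‖)²` around `x i - p`
  have hbound : ∀ i, ‖p - T p‖ ^ 2 ≤
      ε i ^ 2 + 2 * ε i * (R + ‖p‖) - 2 * ⟪x i - p, p - T p⟫_ℝ := fun i => by
    have hsq : ‖x i - T p‖ ^ 2 = ‖x i - p‖ ^ 2 + 2 * ⟪x i - p, p - T p⟫_ℝ + ‖p - T p‖ ^ 2 := by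
      rw [← norm_add_sq_real, sub_add_sub_cancel]
    have hne : ‖x i - T p‖ ≤ ε i + ‖x i - p‖ :=
      (norm_sub_le_norm_sub_add_norm_sub _ (T (x i)) _).trans <| by
        rw [norm_sub_rev]
        exact add_le_add_right (hT _ (hx i) _ hpM) _
    have hxp : ‖x i - p‖ ≤ R + ‖p‖ := (norm_sub_le _ _).trans (by linarith [hR i])
    nlinarith [norm_nonneg (x i - T p), norm_nonneg (x i - p), norm_nonneg (T (x i) - x i)]
  have hlim : Tendsto (fun i => ε i ^ 2 + 2 * ε i * (R + ‖p‖) - 2 * ⟪x i - p, p - T p⟫_ℝ) l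
      (𝓝 (0 ^ 2 + 2 * 0 * (R + ‖p‖) - 2 * ⟪p - p, p - T p⟫_ℝ)) :=
    ((hres.pow 2).add ((hres.const_mul 2).mul_const _)).sub
      ((hp.tendsto_inner_sub p (p - T p)).const_mul 2)
  simp only [sub_self, inner_zero_left] at hlim
  have := ge_of_tendsto (by simpa using hlim) (Eventually.of_forall hbound)
  exact (sub_eq_zero.1 (norm_eq_zero.1 (pow_eq_zero_iff two_ne_zero |>.1
    (le_antisymm this (sq_nonneg _))))).symm

theorem tendsto_inner_sub_of_tendsto_norm_sub_sq {x : ι → H} {l : Filter ι} {p q : H} {a b : ℝ}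
    (hp : Tendsto (fun i => ‖x i - p‖ ^ 2) l (𝓝 a))
    (hq : Tendsto (fun i => ‖x i - q‖ ^ 2) l (𝓝 b)) :
    Tendsto (fun i => ⟪x i, p - q⟫_ℝ) l (𝓝 ((b - a + (‖p‖ ^ 2 - ‖q‖ ^ 2)) / 2)) := by
  refine (((hq.sub hp).add_const (‖p‖ ^ 2 - ‖q‖ ^ 2)).div_const 2).congr fun i => ?_
  simp only [norm_sub_sq_real, inner_sub_right]
  ring

theorem exists_tendstoWeakly_of_tendsto_norm_sub_sq [CompleteSpace H] {x : ι → H}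
    {l : Filter ι} [l.NeBot] {C : Set H} {R : ℝ} (hR : ∀ i, ‖x i‖ ≤ R)
    (hC : ∀ z ∈ C, ∃ a, Tendsto (fun i => ‖x i - z‖ ^ 2) l (𝓝 a))
    (hclust : ∀ (U : Ultrafilter ι) (p : H), ↑U ≤ l → TendstoWeakly x U p → p ∈ C) :
    ∃ p ∈ C, TendstoWeakly x l p := by
  have hU₀ := Ultrafilter.of_le l
  obtain ⟨p, hp⟩ := exists_tendstoWeakly_of_norm_le (Ultrafilter.of l) hR
  have hpC := hclust _ p hU₀ hp
  refine ⟨p, hpC, fun v => tendsto_iff_ultrafilter _ _ _ |>.2 fun U hU => ?_⟩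
  obtain ⟨q, hq⟩ := exists_tendstoWeakly_of_norm_le U hR
  obtain ⟨a, ha⟩ := hC p hpC
  obtain ⟨b, hb⟩ := hC q (hclust U q hU hq)
  -- `⟪x i, p - q⟫` converges along `l`, so its limits along the two ultrafilters agree
  have hL := tendsto_inner_sub_of_tendsto_norm_sub_sq ha hb
  have h₁ := tendsto_nhds_unique (hp (p - q)) (hL.mono_left hU₀)
  have h₂ := tendsto_nhds_unique (hq (p - q)) (hL.mono_left hU)
  have hpq : ⟪p - q, p - q⟫_ℝ = 0 := by rw [inner_sub_left, h₁, h₂, sub_self]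
  rw [sub_eq_zero.1 (inner_self_eq_zero.1 hpq)]
  exact hq v

end Weak

theorem inertial_krasnoselskii_mann_convergence_general
    {H : Type*} [NormedAddCommGroup H] [InnerProductSpace ℝ H] [CompleteSpace H]
    (M : Set H) (hM_closed : IsClosed M)
    (hM_affine : ∀ x ∈ M, ∀ y ∈ M, ∀ t : ℝ, t • x + (1 - t) • y ∈ M)
    (T : H → H) (hT_maps : ∀ x ∈ M, T x ∈ M)
    (hT_nonexp : ∀ x ∈ M, ∀ y ∈ M, ‖T x - T y‖ ≤ ‖x - y‖)
    (hfix : ∃ z ∈ M, T z = z)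
    (αs ρs : ℕ → ℝ) (hparams : InertialCond αs ρs)
    (x : ℕ → H) (hx0 : x 0 ∈ M) (hx1 : x 1 ∈ M)
    (hiter : ∀ k, 1 ≤ k →
      x (k + 1) = x k + αs k • (x k - x (k - 1)) +
        ρs k • (T (x k + αs k • (x k - x (k - 1))) - (x k + αs k • (x k - x (k - 1))))) :
    (Summable fun k => ‖x (k + 1) - x k‖ ^ 2) ∧
    ∃ p ∈ M, T p = p ∧
      ∀ v : H, Tendsto (fun k => ⟪x k, v⟫_ℝ) atTop (𝓝 ⟪p, v⟫_ℝ) := by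
  obtain ⟨α, ρ, σ, hp⟩ := hparams.exists_inertialParams
  obtain ⟨z₀, hz₀M, hTz₀⟩ := hfix
  have hKM : IsInertialKMIterate T αs ρs x := hiter
  have hxM := hKM.mem hM_affine hT_maps hx0 hx1
  have hdesc := fun z (hz : z ∈ M) (hTz : T z = z) =>
    hKM.summable_and_tendsto hp hM_affine hT_nonexp hxM hz hTz
  have hsum := (hdesc z₀ hz₀M hTz₀).1
  have hres := hKM.tendsto_norm_apply_sub hp hM_affine hT_nonexp hxM hsum
  obtain ⟨R, hR⟩ := exists_norm_le_of_tendsto_norm_sub_sq (hdesc z₀ hz₀M hTz₀).2.choose_spec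
  obtain ⟨p, ⟨hpM, hTp⟩, hxp⟩ := exists_tendstoWeakly_of_tendsto_norm_sub_sq
    (C := {z | z ∈ M ∧ T z = z}) hR (fun z hz => (hdesc z hz.1 hz.2).2) fun U q hU hq => by
      have hqM := (convex_of_forall_smul_add_one_sub_smul_mem hM_affine).mem_of_tendstoWeakly
        hM_closed (Eventually.of_forall hxM) hq
      exact ⟨hqM, apply_eq_of_tendstoWeakly hT_nonexp hxM hR (hres.mono_left hU) hqM hq⟩
  exact ⟨hsum, p, hpM, hTp, hxp⟩

theorem inertial_krasnoselskii_mann_convergence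
    {H : Type*} [NormedAddCommGroup H] [InnerProductSpace ℝ H] [CompleteSpace H]
    (M : Set H) (hM_ne : M.Nonempty) (hM_closed : IsClosed M)
    (hM_affine : ∀ x ∈ M, ∀ y ∈ M, ∀ t : ℝ, t • x + (1 - t) • y ∈ M)
    (T : H → H) (hT_maps : ∀ x ∈ M, T x ∈ M)
    (hT_nonexp : ∀ x ∈ M, ∀ y ∈ M, ‖T x - T y‖ ≤ ‖x - y‖)
    (hfix : ∃ z ∈ M, T z = z)
    (αs ρs : ℕ → ℝ) (hparams : InertialCond αs ρs)
    (x : ℕ → H) (hx0 : x 0 ∈ M) (hx1 : x 1 ∈ M)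
    (hiter : ∀ k, 1 ≤ k →
      x (k + 1) = x k + αs k • (x k - x (k - 1)) +
        ρs k • (T (x k + αs k • (x k - x (k - 1))) - (x k + αs k • (x k - x (k - 1))))) :
    (Summable fun k => ‖x (k + 1) - x k‖ ^ 2) ∧
    ∃ p ∈ M, T p = p ∧
      ∀ v : H, Tendsto (fun k => ⟪x k, v⟫_ℝ) atTop (𝓝 ⟪p, v⟫_ℝ) :=
  inertial_krasnoselskii_mann_convergence_general M hM_closed hM_affine T hT_maps hT_nonexp hfix αs
    ρs hparams x hx0 hx1 hiter
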